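/- arXiv:1204.0314 — 5 statements merged into one kernel-verified Lean document; each statement's English description precedes it below -/
import Mathlib

section
/- Let s be a strictly increasing continuous function on (a,b) and m a strictly increasing continuous function on (a,b), and let φ_r be defined by the integral equation φ_r(x) = 1 + r ∫_c^x ds(y) ∫_c^y φ_r(z) dm(z) for a fixed c ∈ (a,b) and r > 0. Then φ_r(x) ≥ 1 for all x ∈ (a,b) and φ_r is convex with respect to the scale s (i.e., x ↦ (φ_r(x) − φ_r(y))/(s(x) − s(y)) is nondecreasing). -/
open MeasureTheory Real Filter

open Topology
/-- the solution `φ_r` of the Volterra integral equation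
`φ_r(x) = 1 + r ∫_c^x ds(y) ∫_c^y φ_r(z) dm(z)` satisfies `φ_r ≥ 1` on `(a,b)`
and is convex with respect to the scale `s`. -/
theorem volterra_solution_ge_one_and_s_convex
    (a b : EReal) (hab : a < b)
    (I : Set ℝ) (hI : I = {x : ℝ | a < (x : EReal) ∧ (x : EReal) < b})
    (s m : ℝ → ℝ)
    (hs : StrictMonoOn s I) (hscont : ContinuousOn s I)
    (hm : StrictMonoOn m I) (hmcont : ContinuousOn m I)
    -- Lebesgue--Stieltjes measures of `s` and `m` on `I`
    (μs μm : Measure ℝ)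
    (hμs : ∀ x ∈ I, ∀ y ∈ I, x ≤ y → μs (Set.Ioc x y) = ENNReal.ofReal (s y - s x))
    (hμm : ∀ x ∈ I, ∀ y ∈ I, x ≤ y → μm (Set.Ioc x y) = ENNReal.ofReal (m y - m x))
    (c : ℝ) (hc : c ∈ I) (r : ℝ) (hr : 0 < r)
    (φ : ℝ → ℝ) (hφcont : ContinuousOn φ I)
    (hφint : ∀ x ∈ I, IntervalIntegrable φ μm c x)
    -- the Volterra-type integral equation
    (heq : ∀ x ∈ I, φ x = 1 + r * ∫ y in c..x, (∫ z in c..y, φ z ∂μm) ∂μs) :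
    (∀ x ∈ I, 1 ≤ φ x) ∧
    (∀ y ∈ I, ∀ x₁ ∈ I, ∀ x₂ ∈ I, x₁ ≤ x₂ → x₁ ≠ y → x₂ ≠ y →
      (φ x₁ - φ y) / (s x₁ - s y) ≤ (φ x₂ - φ y) / (s x₂ - s y)) := by
  have hIcc : ∀ {u v : ℝ}, u ∈ I → v ∈ I → Set.Icc u v ⊆ I := by
    intro u v hu hv t ht
    rw [hI] at hu hv ⊢
    exact ⟨lt_of_lt_of_le hu.1 (EReal.coe_le_coe_iff.mpr ht.1),
      lt_of_le_of_lt (EReal.coe_le_coe_iff.mpr ht.2) hv.2⟩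
  have hφuv : ∀ u ∈ I, ∀ v ∈ I, IntervalIntegrable φ μm u v :=
    fun u hu v hv => (hφint u hu).symm.trans (hφint v hv)
  set F : ℝ → ℝ := fun w => ∫ z in c..w, φ z ∂μm with hF
  have hFc : F c = 0 := intervalIntegral.integral_same
  have hφc : φ c = 1 := by
    have := heq c hc
    simpa [intervalIntegral.integral_same] using this
  have hFsub : ∀ u ∈ I, ∀ v ∈ I, F v - F u = ∫ z in u..v, φ z ∂μm :=
    fun u hu v hv => intervalIntegral.integral_interval_sub_left (hφint v hv) (hφint u hu)
  have hμsfin : ∀ u v : ℝ, u ∈ I → v ∈ I → μs (Set.Ioc u v) ≠ ⊤ := by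
    intro u v hu hv
    rcases le_or_gt u v with h | h
    · rw [hμs u hu v hv h]; exact ENNReal.ofReal_ne_top
    · rw [Set.Ioc_eq_empty (not_lt.mpr h.le), measure_empty]; exact ENNReal.zero_ne_top
  have hint_nonneg : ∀ u v : ℝ, u ≤ v → (∀ t ∈ Set.Ioc u v, 0 ≤ φ t) →
      0 ≤ ∫ z in u..v, φ z ∂μm := by
    intro u v huv hpos
    rw [intervalIntegral.integral_of_le huv]
    exact setIntegral_nonneg measurableSet_Ioc hpos
  have hFmono : ∀ u ∈ I, ∀ v ∈ I, u ≤ v → (∀ t ∈ Set.Icc u v, 0 ≤ φ t) →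
      ∀ y₁ ∈ Set.Icc u v, ∀ y₂ ∈ Set.Icc u v, y₁ ≤ y₂ → F y₁ ≤ F y₂ := by
    intro u hu v hv huv hpos y₁ hy₁ y₂ hy₂ h12
    have h := hFsub y₁ (hIcc hu hv hy₁) y₂ (hIcc hu hv hy₂)
    have h2 : 0 ≤ ∫ z in y₁..y₂, φ z ∂μm :=
      hint_nonneg y₁ y₂ h12 (fun t ht => hpos t ⟨le_trans hy₁.1 ht.1.le, le_trans ht.2 hy₂.2⟩)
    linarith
  have hFint : ∀ u ∈ I, ∀ v ∈ I, u ≤ v → (∀ t ∈ Set.Icc u v, 0 ≤ φ t) →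
      IntervalIntegrable F μs u v := by
    intro u hu v hv huv hpos
    rw [intervalIntegrable_iff_integrableOn_Ioc_of_le huv]
    set G : ℝ → ℝ := fun y => F (max u (min v y)) with hG
    have hclamp : ∀ y : ℝ, max u (min v y) ∈ Set.Icc u v :=
      fun y => ⟨le_max_left _ _, max_le huv (min_le_left _ _)⟩
    have hGmono : Monotone G := by
      intro y₁ y₂ h
      exact hFmono u hu v hv huv hpos _ (hclamp y₁) _ (hclamp y₂)
        (max_le_max le_rfl (min_le_min le_rfl h))
    have hGbd : ∀ y : ℝ, ‖G y‖ ≤ max |F u| |F v| := by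
      intro y
      have h1 : F u ≤ G y := hFmono u hu v hv huv hpos u ⟨le_rfl, huv⟩ _ (hclamp y)
        (hclamp y).1
      have h2 : G y ≤ F v := hFmono u hu v hv huv hpos _ (hclamp y) v ⟨huv, le_rfl⟩
        (hclamp y).2
      rw [Real.norm_eq_abs, abs_le]
      constructor
      · have := neg_abs_le (F u)
        have := le_max_left |F u| |F v|
        linarith
      · have := le_abs_self (F v)
        have := le_max_right |F u| |F v|
        linarith
    have hGint : IntegrableOn G (Set.Ioc u v) μs :=
      Measure.integrableOn_of_bounded (hμsfin u v hu hv)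
        hGmono.measurable.aestronglyMeasurable (ae_of_all _ hGbd)
    refine (hGint.congr_fun ?_ measurableSet_Ioc)
    intro y hy
    simp only [hG]
    rw [min_eq_right hy.2, max_eq_right hy.1.le]
  have hsplit : ∀ u ∈ I, ∀ v ∈ I, IntervalIntegrable F μs c u → IntervalIntegrable F μs c v →
      φ v - φ u = r * ∫ y in u..v, F y ∂μs := by
    intro u hu v hv hiu hiv
    rw [heq u hu, heq v hv, ← intervalIntegral.integral_interval_sub_left hiv hiu]
    ring
  have claim_right : ∀ x ∈ I, c ≤ x → ∀ t ∈ Set.Icc c x, 1 ≤ φ t := by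
    intro x hx hcx
    set S := {t | t ∈ Set.Icc c x ∧ ∀ u ∈ Set.Icc c t, 1 ≤ φ u} with hSdef
    have hcS : c ∈ S := by
      refine ⟨⟨le_rfl, hcx⟩, fun u hu => ?_⟩
      have : u = c := le_antisymm hu.2 hu.1
      rw [this, hφc]
    have hSne : S.Nonempty := ⟨c, hcS⟩
    have hSbdd : BddAbove S := ⟨x, fun t ht => ht.1.2⟩
    set T := sSup S with hT
    have hcT : c ≤ T := le_csSup hSbdd hcS
    have hTx : T ≤ x := csSup_le hSne (fun t ht => ht.1.2)
    have hTI : T ∈ I := hIcc hc hx ⟨hcT, hTx⟩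
    have hlt : ∀ u, c ≤ u → u < T → 1 ≤ φ u := by
      intro u h1 h2
      obtain ⟨t, htS, hut⟩ := exists_lt_of_lt_csSup hSne h2
      exact htS.2 u ⟨h1, hut.le⟩
    have hφT : 1 ≤ φ T := by
      rcases eq_or_lt_of_le hcT with heqc | hltc
      · rw [← heqc, hφc]
      · have hcont : ContinuousWithinAt φ (Set.Ioo c T) T :=
          ((hφcont T hTI).mono (fun t ht => hIcc hc hTI ⟨ht.1.le, ht.2.le⟩))
        haveI : (𝓝[Set.Ioo c T] T).NeBot := right_nhdsWithin_Ioo_neBot hltc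
        refine ge_of_tendsto hcont ?_
        filter_upwards [self_mem_nhdsWithin] with u hu
        exact hlt u hu.1.le hu.2
    have hTS : T ∈ S := by
      refine ⟨⟨hcT, hTx⟩, fun u hu => ?_⟩
      rcases eq_or_lt_of_le hu.2 with h | h
      · rw [h]; exact hφT
      · exact hlt u hu.1 h
    rcases eq_or_lt_of_le hTx with hTex | hTlt
    · intro t ht; exact hTS.2 t ⟨ht.1, hTex ▸ ht.2⟩
    · exfalso
      have hcont2 : ContinuousWithinAt φ (Set.Icc c x) T := (hφcont T hTI).mono (hIcc hc hx)
      have hev : ∀ᶠ u in 𝓝[Set.Icc c x] T, 0 < φ u :=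
        hcont2 (Ioi_mem_nhds (by linarith : (0:ℝ) < φ T))
      rw [eventually_nhdsWithin_iff, Metric.eventually_nhds_iff] at hev
      obtain ⟨ε, hε, hball⟩ := hev
      set t' := min x (T + ε / 2) with ht'
      have hTt' : T < t' := lt_min hTlt (by linarith)
      have ht'x : t' ≤ x := min_le_left _ _
      have hct' : c ≤ t' := le_trans hcT hTt'.le
      have ht'I : t' ∈ I := hIcc hc hx ⟨hct', ht'x⟩
      have hposTt' : ∀ u ∈ Set.Icc T t', 0 < φ u := by
        intro u hu
        refine hball (show dist u T < ε by
          rw [Real.dist_eq, abs_of_nonneg (by linarith [hu.1])]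
          have : u ≤ T + ε / 2 := le_trans hu.2 (min_le_right _ _)
          linarith) ⟨le_trans hcT hu.1, le_trans hu.2 ht'x⟩
      have hpos_ct' : ∀ u ∈ Set.Icc c t', 0 ≤ φ u := by
        intro u hu
        rcases le_total u T with h | h
        · linarith [hTS.2 u ⟨hu.1, h⟩]
        · exact (hposTt' u ⟨h, hu.2⟩).le
      have hFiT : IntervalIntegrable F μs c T :=
        hFint c hc T hTI hcT (fun t ht => by linarith [hTS.2 t ht])
      have ht'S : t' ∈ S := by
        refine ⟨⟨hct', ht'x⟩, fun u hu => ?_⟩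
        rcases le_total u T with h | h
        · exact hTS.2 u ⟨hu.1, h⟩
        · -- T ≤ u ≤ t'
          have huI : u ∈ I := hIcc hc hx ⟨hu.1, le_trans hu.2 ht'x⟩
          have hFiu : IntervalIntegrable F μs c u :=
            hFint c hc u huI hu.1 (fun t ht => hpos_ct' t ⟨ht.1, le_trans ht.2 hu.2⟩)
          have hsp := hsplit T hTI u huI hFiT hFiu
          have hnn : 0 ≤ ∫ y in T..u, F y ∂μs := by
            rw [intervalIntegral.integral_of_le h]
            refine setIntegral_nonneg measurableSet_Ioc (fun y hy => ?_)
            have hyI : y ∈ I := hIcc hTI huI (Set.Ioc_subset_Icc_self hy)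
            have h1 : F y - F c = ∫ z in c..y, φ z ∂μm := hFsub c hc y hyI
            have h2 : 0 ≤ ∫ z in c..y, φ z ∂μm := by
              refine hint_nonneg c y (le_trans hcT hy.1.le) (fun t ht => ?_)
              exact hpos_ct' t ⟨ht.1.le, le_trans ht.2 (le_trans hy.2 hu.2)⟩
            rw [hFc] at h1; linarith
          nlinarith [hφT]
      have := le_csSup hSbdd ht'S
      exact absurd this (not_le.mpr hTt')
  have claim_left : ∀ x ∈ I, x ≤ c → ∀ t ∈ Set.Icc x c, 1 ≤ φ t := by
    intro x hx hxc
    set S := {t | t ∈ Set.Icc x c ∧ ∀ u ∈ Set.Icc t c, 1 ≤ φ u} with hSdef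
    have hcS : c ∈ S := by
      refine ⟨⟨hxc, le_rfl⟩, fun u hu => ?_⟩
      have : u = c := le_antisymm hu.2 hu.1
      rw [this, hφc]
    have hSne : S.Nonempty := ⟨c, hcS⟩
    have hSbdd : BddBelow S := ⟨x, fun t ht => ht.1.1⟩
    set T := sInf S with hT
    have hTc : T ≤ c := csInf_le hSbdd hcS
    have hxT : x ≤ T := le_csInf hSne (fun t ht => ht.1.1)
    have hTI : T ∈ I := hIcc hx hc ⟨hxT, hTc⟩
    have hlt : ∀ u, T < u → u ≤ c → 1 ≤ φ u := by
      intro u h2 h1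
      obtain ⟨t, htS, hut⟩ := exists_lt_of_csInf_lt hSne h2
      exact htS.2 u ⟨hut.le, h1⟩
    have hφT : 1 ≤ φ T := by
      rcases eq_or_lt_of_le hTc with heqc | hltc
      · rw [heqc, hφc]
      · have hcont : ContinuousWithinAt φ (Set.Ioo T c) T :=
          ((hφcont T hTI).mono (fun t ht => hIcc hTI hc ⟨ht.1.le, ht.2.le⟩))
        haveI : (𝓝[Set.Ioo T c] T).NeBot := left_nhdsWithin_Ioo_neBot hltc
        refine ge_of_tendsto hcont ?_
        filter_upwards [self_mem_nhdsWithin] with u hu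
        exact hlt u hu.1 hu.2.le
    have hTS : T ∈ S := by
      refine ⟨⟨hxT, hTc⟩, fun u hu => ?_⟩
      rcases eq_or_lt_of_le hu.1 with h | h
      · rw [← h]; exact hφT
      · exact hlt u h hu.2
    rcases eq_or_lt_of_le hxT with hTex | hTlt
    · intro t ht; exact hTS.2 t ⟨hTex ▸ ht.1, ht.2⟩
    · exfalso
      have hcont2 : ContinuousWithinAt φ (Set.Icc x c) T := (hφcont T hTI).mono (hIcc hx hc)
      have hev : ∀ᶠ u in 𝓝[Set.Icc x c] T, 0 < φ u :=
        hcont2 (Ioi_mem_nhds (by linarith : (0:ℝ) < φ T))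
      rw [eventually_nhdsWithin_iff, Metric.eventually_nhds_iff] at hev
      obtain ⟨ε, hε, hball⟩ := hev
      set t' := max x (T - ε / 2) with ht'
      have hTt' : t' < T := max_lt hTlt (by linarith)
      have ht'x : x ≤ t' := le_max_left _ _
      have hct' : t' ≤ c := le_trans hTt'.le hTc
      have ht'I : t' ∈ I := hIcc hx hc ⟨ht'x, hct'⟩
      have hposTt' : ∀ u ∈ Set.Icc t' T, 0 < φ u := by
        intro u hu
        refine hball (show dist u T < ε by
          rw [Real.dist_eq, abs_of_nonpos (by linarith [hu.2])]
          have : T - ε / 2 ≤ u := le_trans (le_max_right _ _) hu.1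
          linarith) ⟨le_trans ht'x hu.1, le_trans hu.2 hTc⟩
      have hpos_ct' : ∀ u ∈ Set.Icc t' c, 0 ≤ φ u := by
        intro u hu
        rcases le_total T u with h | h
        · linarith [hTS.2 u ⟨h, hu.2⟩]
        · exact (hposTt' u ⟨hu.1, h⟩).le
      have hFiT : IntervalIntegrable F μs c T :=
        (hFint T hTI c hc hTc (fun t ht => by linarith [hTS.2 t ht])).symm
      have ht'S : t' ∈ S := by
        refine ⟨⟨ht'x, hct'⟩, fun u hu => ?_⟩
        rcases le_total T u with h | h
        · exact hTS.2 u ⟨h, hu.2⟩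
        · -- t' ≤ u ≤ T
          have huI : u ∈ I := hIcc ht'I hc ⟨hu.1, hu.2⟩
          have hFiu : IntervalIntegrable F μs c u :=
            (hFint u huI c hc hu.2 (fun t ht => hpos_ct' t ⟨le_trans hu.1 ht.1, ht.2⟩)).symm
          have hsp := hsplit T hTI u huI hFiT hFiu
          have hnn : ∫ y in u..T, F y ∂μs ≤ 0 := by
            rw [intervalIntegral.integral_of_le h]
            refine setIntegral_nonpos measurableSet_Ioc (fun y hy => ?_)
            have hyI : y ∈ I := hIcc huI hTI (Set.Ioc_subset_Icc_self hy)
            have h1 : F c - F y = ∫ z in y..c, φ z ∂μm := hFsub y hyI c hc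
            have h2 : 0 ≤ ∫ z in y..c, φ z ∂μm := by
              refine hint_nonneg y c (le_trans hy.2 hTc) (fun t ht => ?_)
              exact hpos_ct' t ⟨le_trans hu.1 (le_trans hy.1.le ht.1.le), ht.2⟩
            rw [hFc] at h1; linarith
          rw [intervalIntegral.integral_symm] at hsp
          nlinarith [hφT]
      have := csInf_le hSbdd ht'S
      exact absurd this (not_le.mpr hTt')
  have part1 : ∀ x ∈ I, 1 ≤ φ x := by
    intro x hx
    rcases le_total c x with h | h
    · exact claim_right x hx h x ⟨h, le_rfl⟩
    · exact claim_left x hx h x ⟨le_rfl, h⟩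
  have hφ0 : ∀ {u v : ℝ}, u ∈ I → v ∈ I → ∀ t ∈ Set.Icc u v, 0 ≤ φ t :=
    fun hu hv t ht => le_trans zero_le_one (part1 t (hIcc hu hv ht))
  have hFintI : ∀ u ∈ I, ∀ v ∈ I, IntervalIntegrable F μs u v := by
    intro u hu v hv
    rcases le_total u v with h | h
    · exact hFint u hu v hv h (hφ0 hu hv)
    · exact (hFint v hv u hu h (hφ0 hv hu)).symm
  have key : ∀ u ∈ I, ∀ v ∈ I, u ≤ v →
      r * F u * (s v - s u) ≤ φ v - φ u ∧ φ v - φ u ≤ r * F v * (s v - s u) := by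
    intro u hu v hv huv
    have hsp : φ v - φ u = r * ∫ y in u..v, F y ∂μs :=
      hsplit u hu v hv (hFintI c hc u hu) (hFintI c hc v hv)
    rw [intervalIntegral.integral_of_le huv] at hsp
    have hμsval : (μs (Set.Ioc u v)).toReal = s v - s u := by
      rw [hμs u hu v hv huv]
      exact ENNReal.toReal_ofReal (sub_nonneg.mpr (hs.monotoneOn hu hv huv))
    have hFi : IntegrableOn F (Set.Ioc u v) μs := by
      have := hFint u hu v hv huv (hφ0 hu hv)
      rwa [intervalIntegrable_iff_integrableOn_Ioc_of_le huv] at this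
    have hci : IntegrableOn (fun _ : ℝ => F u) (Set.Ioc u v) μs :=
      integrableOn_const (hμsfin u v hu hv)
    have hci' : IntegrableOn (fun _ : ℝ => F v) (Set.Ioc u v) μs :=
      integrableOn_const (hμsfin u v hu hv)
    have hlow : F u * (s v - s u) ≤ ∫ y in Set.Ioc u v, F y ∂μs := by
      have := setIntegral_mono_on hci hFi measurableSet_Ioc
        (fun y hy => hFmono u hu v hv huv (hφ0 hu hv) u ⟨le_rfl, huv⟩ y
          (Set.Ioc_subset_Icc_self hy) hy.1.le)
      rwa [setIntegral_const, measureReal_def, hμsval, smul_eq_mul, mul_comm] at this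
    have hhigh : ∫ y in Set.Ioc u v, F y ∂μs ≤ F v * (s v - s u) := by
      have := setIntegral_mono_on hFi hci' measurableSet_Ioc
        (fun y hy => hFmono u hu v hv huv (hφ0 hu hv) y
          (Set.Ioc_subset_Icc_self hy) v ⟨huv, le_rfl⟩ hy.2)
      rwa [setIntegral_const, measureReal_def, hμsval, smul_eq_mul, mul_comm] at this
    constructor
    · rw [hsp]; nlinarith
    · rw [hsp]; nlinarith
  refine ⟨part1, ?_⟩
  intro y hy x₁ hx₁ x₂ hx₂ h12 h1y h2y
  rcases eq_or_lt_of_le h12 with rfl | h12'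
  · exact le_rfl
  have flip : ∀ p q d : ℝ, (p - q) / d = (q - p) / (-d) := by
    intro p q d
    rw [div_neg, ← neg_div, neg_sub]
  rcases lt_or_gt_of_ne h1y with h1 | h1
  · rcases lt_or_gt_of_ne h2y with h2 | h2
    · -- x₁ < x₂ < y
      obtain ⟨_, Hu⟩ := key x₁ hx₁ x₂ hx₂ h12'.le
      obtain ⟨Hl, _⟩ := key x₂ hx₂ y hy h2.le
      have d1 : s x₁ < s y := hs hx₁ hy h1
      have d2 : s x₂ < s y := hs hx₂ hy h2
      have d3 : s x₁ < s x₂ := hs hx₁ hx₂ h12'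
      rw [flip (φ x₁) (φ y), flip (φ x₂) (φ y), show -(s x₁ - s y) = s y - s x₁ by ring,
        show -(s x₂ - s y) = s y - s x₂ by ring,
        div_le_div_iff₀ (by linarith) (by linarith)]
      nlinarith [mul_le_mul_of_nonneg_right Hu (by linarith : (0:ℝ) ≤ s y - s x₂),
        mul_le_mul_of_nonneg_right Hl (by linarith : (0:ℝ) ≤ s x₂ - s x₁)]
    · -- x₁ < y < x₂
      obtain ⟨_, Hu⟩ := key x₁ hx₁ y hy h1.le
      obtain ⟨Hl, _⟩ := key y hy x₂ hx₂ h2.le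
      have d1 : s x₁ < s y := hs hx₁ hy h1
      have d2 : s y < s x₂ := hs hy hx₂ h2
      rw [flip (φ x₁) (φ y), show -(s x₁ - s y) = s y - s x₁ by ring,
        div_le_div_iff₀ (by linarith) (by linarith)]
      nlinarith [mul_le_mul_of_nonneg_right Hu (by linarith : (0:ℝ) ≤ s x₂ - s y),
        mul_le_mul_of_nonneg_right Hl (by linarith : (0:ℝ) ≤ s y - s x₁)]
  · -- y < x₁ < x₂
    have h2 : y < x₂ := lt_trans h1 h12'
    obtain ⟨_, Hu⟩ := key y hy x₁ hx₁ h1.le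
    obtain ⟨Hl, _⟩ := key x₁ hx₁ x₂ hx₂ h12'.le
    have d1 : s y < s x₁ := hs hy hx₁ h1
    have d2 : s y < s x₂ := hs hy hx₂ h2
    have d3 : s x₁ < s x₂ := hs hx₁ hx₂ h12'
    rw [div_le_div_iff₀ (by linarith) (by linarith)]
    nlinarith [mul_le_mul_of_nonneg_right Hu (by linarith : (0:ℝ) ≤ s x₂ - s x₁),
      mul_le_mul_of_nonneg_right Hl (by linarith : (0:ℝ) ≤ s x₁ - s y)]
end

section
/- Let u and v be two solutions on (a,b) of the second-order generalized ODE 𝒟_m 𝒟_s f = r f (meaning f ∈ D(𝒟_s) and 𝒟_s f(x) − 𝒟_s f(y) = r ∫_y^x f dm). Then the Wronskian W(x) = v(x)·𝒟_s u(x) − u(x)·𝒟_s v(x) is constant on (a,b). -/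
/-!
Integration by parts for Lebesgue–Stieltjes integrals gives, for `y < x`,
`v x * us x - v y * us y = ∫ us * vs dμs + r ∫ u * v dμm`, and the same expression for
`u x * vs x - u y * vs y`; subtracting, the Wronskian does not change. Integration by parts
itself is Fubini on the product `(y, x]²` split along the diagonal; it needs one of the two
measures to be atomless there, which holds for `μs` because `s` is continuous.
-/

open MeasureTheory Real Filter

open Set Topology

namespace MeasureTheory

variable {α β 𝕜 : Type*} [MeasurableSpace α] [MeasurableSpace β] [RCLike 𝕜]
  {μ : Measure α} {ν : Measure β} {F : α → 𝕜} {G : β → 𝕜} {S : Set (α × β)}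

lemma integral_indicator_mul_eq_setIntegral_mul (hS : MeasurableSet S) (z : β) :
    ∫ w, S.indicator (fun p => F p.1 * G p.2) (w, z) ∂μ =
      (∫ w in {w | (w, z) ∈ S}, F w ∂μ) * G z := by
  rw [← integral_mul_const,
    ← integral_indicator (s := {w | (w, z) ∈ S}) (measurable_prodMk_right hS)]
  rfl

lemma integral_indicator_mul_eq_mul_setIntegral (hS : MeasurableSet S) (w : α) :
    ∫ z, S.indicator (fun p => F p.1 * G p.2) (w, z) ∂ν =
      F w * ∫ z in {z | (w, z) ∈ S}, G z ∂ν := by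
  rw [← integral_const_mul,
    ← integral_indicator (s := {z | (w, z) ∈ S}) (measurable_prodMk_left hS)]
  rfl

lemma Integrable.setIntegral_slice_mul [SFinite μ] [SFinite ν] (hS : MeasurableSet S)
    (hF : Integrable F μ) (hG : Integrable G ν) :
    Integrable (fun z => (∫ w in {w | (w, z) ∈ S}, F w ∂μ) * G z) ν :=
  (((hF.mul_prod hG).indicator hS).integral_prod_right).congr
    (ae_of_all _ (integral_indicator_mul_eq_setIntegral_mul hS))

lemma Integrable.mul_setIntegral_slice [SFinite ν] (hS : MeasurableSet S)
    (hF : Integrable F μ) (hG : Integrable G ν) :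
    Integrable (fun w => F w * ∫ z in {z | (w, z) ∈ S}, G z ∂ν) μ :=
  (((hF.mul_prod hG).indicator hS).integral_prod_left).congr
    (ae_of_all _ (integral_indicator_mul_eq_mul_setIntegral hS))

theorem integral_mul_integral_eq_add_integral_slices [SFinite μ] [SFinite ν]
    (hS : MeasurableSet S) (hF : Integrable F μ) (hG : Integrable G ν) :
    (∫ w, F w ∂μ) * (∫ z, G z ∂ν) =
      (∫ z, (∫ w in {w | (w, z) ∈ S}, F w ∂μ) * G z ∂ν) +
        ∫ w, F w * ∫ z in {z | (w, z) ∈ Sᶜ}, G z ∂ν ∂μ := by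
  have hFG := hF.mul_prod hG
  rw [← integral_prod_mul, ← integral_add_compl hS hFG, ← integral_indicator hS,
    ← integral_indicator hS.compl, integral_prod_symm _ (hFG.indicator hS),
    integral_prod _ (hFG.indicator hS.compl)]
  simp only [integral_indicator_mul_eq_setIntegral_mul hS,
    integral_indicator_mul_eq_mul_setIntegral hS.compl]

end MeasureTheory

theorem mul_sub_mul_eq_intervalIntegral_add {μ ν : Measure ℝ} {f g F G : ℝ → ℝ} {y x : ℝ}
    (hyx : y < x) (hμ : μ (Ioc y x) ≠ ⊤) (hν : ν (Ioc y x) ≠ ⊤)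
    (hν₀ : ∀ t ∈ Ioc y x, ν {t} = 0)
    (hF : IntervalIntegrable F μ y x) (hG : IntervalIntegrable G ν y x)
    (hf : ∀ t ∈ Ioc y x, f t - f y = ∫ z in y..t, F z ∂μ)
    (hg : ∀ t ∈ Ioc y x, g t - g y = ∫ z in y..t, G z ∂ν) :
    f x * g x - f y * g y = (∫ z in y..x, f z * G z ∂ν) + ∫ z in y..x, F z * g z ∂μ := by
  have : IsFiniteMeasure (μ.restrict (Ioc y x)) := isFiniteMeasure_restrict.2 hμ
  have : IsFiniteMeasure (ν.restrict (Ioc y x)) := isFiniteMeasure_restrict.2 hν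
  have primitive {ρ : Measure ℝ} {h H : ℝ → ℝ}
      (hh : ∀ t ∈ Ioc y x, h t - h y = ∫ z in y..t, H z ∂ρ) {t : ℝ} (ht : t ∈ Ioc y x) :
      ∫ z in Iic t, H z ∂ρ.restrict (Ioc y x) = h t - h y := by
    rw [Measure.restrict_restrict measurableSet_Iic, Iic_inter_Ioc_of_le ht.2, hh t ht,
      intervalIntegral.integral_of_le ht.1.le]
  set S : Set (ℝ × ℝ) := {p | p.1 ≤ p.2}
  have hS : MeasurableSet S := measurableSet_le'
  have hF' : Integrable F (μ.restrict (Ioc y x)) :=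
    (intervalIntegrable_iff_integrableOn_Ioc_of_le hyx.le).1 hF
  have hG' : Integrable G (ν.restrict (Ioc y x)) :=
    (intervalIntegrable_iff_integrableOn_Ioc_of_le hyx.le).1 hG
  have hfx : f x - f y = ∫ z in Ioc y x, F z ∂μ := by
    rw [hf x ⟨hyx, le_rfl⟩, intervalIntegral.integral_of_le hyx.le]
  have hgx : g x - g y = ∫ z in Ioc y x, G z ∂ν := by
    rw [hg x ⟨hyx, le_rfl⟩, intervalIntegral.integral_of_le hyx.le]
  have hfG : ∫ z in Ioc y x, f z * G z ∂ν = f y * (g x - g y) +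
      ∫ z in Ioc y x, (∫ w in {w | (w, z) ∈ S}, F w ∂μ.restrict (Ioc y x)) * G z ∂ν := by
    rw [hgx, ← integral_const_mul,
      ← integral_add (hG'.const_mul _) (hF'.setIntegral_slice_mul hS hG')]
    refine setIntegral_congr_fun measurableSet_Ioc fun z hz => ?_
    rw [show {w | (w, z) ∈ S} = Iic z from rfl, primitive hf hz]
    ring
  have hFg : ∫ z in Ioc y x, F z * g z ∂μ = (f x - f y) * g y +
      ∫ w in Ioc y x, F w * ∫ z in {z | (w, z) ∈ Sᶜ}, G z ∂ν.restrict (Ioc y x) ∂μ := by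
    rw [hfx, ← integral_mul_const,
      ← integral_add (hF'.mul_const _) (hF'.mul_setIntegral_slice hS.compl hG')]
    refine setIntegral_congr_fun measurableSet_Ioc fun w hw => ?_
    have hw₀ : ν.restrict (Ioc y x) {w} = 0 :=
      le_zero_iff.1 ((Measure.restrict_apply_le _ _).trans_eq (hν₀ w hw))
    rw [show {z | (w, z) ∈ Sᶜ} = Iio w from
        ext fun z => (not_le : ¬w ≤ z ↔ z < w),
      ← integral_Iic_eq_integral_Iio' hw₀, primitive hg hw]
    ring
  have hprod := integral_mul_integral_eq_add_integral_slices hS hF' hG'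
  rw [← hfx, ← hgx] at hprod
  rw [intervalIntegral.integral_of_le hyx.le, intervalIntegral.integral_of_le hyx.le,
    hfG, hFg]
  linear_combination hprod

theorem measure_singleton_eq_zero_of_continuousOn {μ : Measure ℝ} {s : ℝ → ℝ} {U : Set ℝ}
    (hU : IsOpen U) (hs : ContinuousOn s U)
    (hμ : ∀ x ∈ U, ∀ y ∈ U, x ≤ y → μ (Ioc x y) = ENNReal.ofReal (s y - s x))
    {t : ℝ} (ht : t ∈ U) : μ {t} = 0 := by
  have hlim : Tendsto (fun q => ENNReal.ofReal (s t - s q)) (𝓝[<] t) (𝓝 0) := by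
    simpa using ENNReal.tendsto_ofReal
      ((tendsto_const_nhds (x := s t)).sub (hs.continuousAt (hU.mem_nhds ht)).continuousWithinAt)
  refine le_antisymm (ge_of_tendsto hlim ?_) bot_le
  filter_upwards [nhdsWithin_le_nhds (hU.mem_nhds ht), self_mem_nhdsWithin] with q hq hqt
  rw [← hμ q hq t ht (le_of_lt hqt)]
  exact measure_mono (singleton_subset_iff.2 ⟨hqt, le_rfl⟩)

theorem wronskian_constant_general
    (a b : EReal)
    (I : Set ℝ) (hI : I = {x : ℝ | a < (x : EReal) ∧ (x : EReal) < b})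
    (s m : ℝ → ℝ)
    (hscont : ContinuousOn s I)
    -- Lebesgue--Stieltjes measures of `s` and `m` on `I`
    (μs μm : Measure ℝ)
    (hμs : ∀ x ∈ I, ∀ y ∈ I, x ≤ y → μs (Set.Ioc x y) = ENNReal.ofReal (s y - s x))
    (hμm : ∀ x ∈ I, ∀ y ∈ I, x ≤ y → μm (Set.Ioc x y) = ENNReal.ofReal (m y - m x))
    (r : ℝ)
    (u v us vs : ℝ → ℝ)
    -- `us = 𝒟_s u` and `vs = 𝒟_s v`
    (hu : ∀ x ∈ I, ∀ y ∈ I, u x - u y = ∫ z in y..x, us z ∂μs)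
    (hv : ∀ x ∈ I, ∀ y ∈ I, v x - v y = ∫ z in y..x, vs z ∂μs)
    -- `𝒟_m 𝒟_s u = r u` and `𝒟_m 𝒟_s v = r v`
    (hus : ∀ x ∈ I, ∀ y ∈ I, us x - us y = r * ∫ z in y..x, u z ∂μm)
    (hvs : ∀ x ∈ I, ∀ y ∈ I, vs x - vs y = r * ∫ z in y..x, v z ∂μm)
    (huint : ∀ x ∈ I, ∀ y ∈ I, IntervalIntegrable u μm y x ∧ IntervalIntegrable us μs y x)
    (hvint : ∀ x ∈ I, ∀ y ∈ I, IntervalIntegrable v μm y x ∧ IntervalIntegrable vs μs y x) :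
    ∀ x ∈ I, ∀ y ∈ I,
      v x * us x - u x * vs x = v y * us y - u y * vs y := by
  have hI' : I = (↑) ⁻¹' Ioo a b := hI
  have hIopen : IsOpen I := hI' ▸ isOpen_Ioo.preimage continuous_coe_real_ereal
  have hIconn : I.OrdConnected :=
    hI' ▸ ordConnected_Ioo.preimage_mono EReal.coe_strictMono.monotone
  intro x hx y hy
  wlog hyx : y < x generalizing x y
  · rcases (not_lt.1 hyx).eq_or_lt with rfl | hxy
    · rfl
    · exact (this y hy x hx hxy).symm
  have hsub : Ioc y x ⊆ I := Ioc_subset_Icc_self.trans (hIconn.out hy hx)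
  have hatoms (t : ℝ) (ht : t ∈ Ioc y x) : μs {t} = 0 :=
    measure_singleton_eq_zero_of_continuousOn hIopen hscont hμs (hsub ht)
  have hμm_fin : μm (Ioc y x) ≠ ⊤ := hμm y hy x hx hyx.le ▸ ENNReal.ofReal_ne_top
  have hμs_fin : μs (Ioc y x) ≠ ⊤ := hμs y hy x hx hyx.le ▸ ENNReal.ofReal_ne_top
  have hvus := mul_sub_mul_eq_intervalIntegral_add hyx hμm_fin hμs_fin
    hatoms ((huint x hx y hy).1.const_mul r) (hvint x hx y hy).2
    (fun t ht => by rw [intervalIntegral.integral_const_mul]; exact hus t (hsub ht) y hy)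
    (fun t ht => hv t (hsub ht) y hy)
  have huvs := mul_sub_mul_eq_intervalIntegral_add hyx hμm_fin hμs_fin
    hatoms ((hvint x hx y hy).1.const_mul r) (huint x hx y hy).2
    (fun t ht => by rw [intervalIntegral.integral_const_mul]; exact hvs t (hsub ht) y hy)
    (fun t ht => hu t (hsub ht) y hy)
  have hcomm_s : ∫ z in y..x, us z * vs z ∂μs = ∫ z in y..x, vs z * us z ∂μs := by
    simp only [mul_comm]
  have hcomm_m : ∫ z in y..x, r * u z * v z ∂μm = ∫ z in y..x, r * v z * u z ∂μm := by
    simp only [mul_right_comm]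
  linear_combination hvus - huvs + hcomm_s + hcomm_m

/-- if `u` and `v` both solve `𝒟_m 𝒟_s f = r f` on `(a,b)`, then the
Wronskian `W(x) = v(x) 𝒟_s u(x) − u(x) 𝒟_s v(x)` is constant on `(a,b)`. -/
theorem wronskian_constant
    (a b : EReal) (hab : a < b)
    (I : Set ℝ) (hI : I = {x : ℝ | a < (x : EReal) ∧ (x : EReal) < b})
    (s m : ℝ → ℝ)
    (hs : StrictMonoOn s I) (hscont : ContinuousOn s I)
    (hm : StrictMonoOn m I) (hmcont : ContinuousOn m I)
    -- Lebesgue--Stieltjes measures of `s` and `m` on `I`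
    (μs μm : Measure ℝ)
    (hμs : ∀ x ∈ I, ∀ y ∈ I, x ≤ y → μs (Set.Ioc x y) = ENNReal.ofReal (s y - s x))
    (hμm : ∀ x ∈ I, ∀ y ∈ I, x ≤ y → μm (Set.Ioc x y) = ENNReal.ofReal (m y - m x))
    (r : ℝ) (hr : 0 < r)
    (u v us vs : ℝ → ℝ)
    -- `us = 𝒟_s u` and `vs = 𝒟_s v`
    (hu : ∀ x ∈ I, ∀ y ∈ I, u x - u y = ∫ z in y..x, us z ∂μs)
    (hv : ∀ x ∈ I, ∀ y ∈ I, v x - v y = ∫ z in y..x, vs z ∂μs)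
    -- `𝒟_m 𝒟_s u = r u` and `𝒟_m 𝒟_s v = r v`
    (hus : ∀ x ∈ I, ∀ y ∈ I, us x - us y = r * ∫ z in y..x, u z ∂μm)
    (hvs : ∀ x ∈ I, ∀ y ∈ I, vs x - vs y = r * ∫ z in y..x, v z ∂μm)
    (huint : ∀ x ∈ I, ∀ y ∈ I, IntervalIntegrable u μm y x ∧ IntervalIntegrable us μs y x)
    (hvint : ∀ x ∈ I, ∀ y ∈ I, IntervalIntegrable v μm y x ∧ IntervalIntegrable vs μs y x) :
    ∀ x ∈ I, ∀ y ∈ I,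
      v x * us x - u x * vs x = v y * us y - u y * vs y :=
  wronskian_constant_general a b I hI s m hscont μs μm hμs hμm r u v us vs hu hv hus hvs huint hvint
end

section
/- Suppose a is an accessible boundary (∫_a^c ds(x) ∫_x^c dm(y) < ∞) for the generalized operator L = 𝒟_m 𝒟_s, and let u_r, v_r be the positive increasing (resp. decreasing) solutions of Lf = r f normalized by Wronskian 1, with u_r(a+) = 0 and 𝒟_s u_r(a+) = k ∈ (0,∞). Then lim_{x→a+} u_r(x)·𝒟_s v_r(x) = 0, and consequently 𝒟_s u_r(a+) = 1/v_r(a+). -/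
/-!
Since `𝒟_s v_r` is increasing, `v_r(x) - v_r(y) = ∫_y^x 𝒟_s v_r ds ≤ 𝒟_s v_r(x) (s(x) - s(y))` for
`y < x`; as `s(a+)` is finite we may let `y → a+` and get `-𝒟_s v_r(x) s(a, x) ≤ v_r(a+) - v_r(x)`.
Likewise `u_r(x) ≤ 𝒟_s u_r(x) s(a, x)`. As `𝒟_s v_r ≤ 0`, this squeezes
`0 ≤ -u_r 𝒟_s v_r ≤ 𝒟_s u_r (v_r(a+) - v_r) → 0`, and the Wronskian at `a+` gives `v_r(a+) k = 1`.
-/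

open MeasureTheory Filter Topology Set

theorem MonotoneOn.integrableOn_Ioc {μ : Measure ℝ} {f : ℝ → ℝ} {x y : ℝ}
    (hf : MonotoneOn f (Icc x y)) (hμ : μ (Ioc x y) ≠ ⊤) : IntegrableOn f (Ioc x y) μ := by
  refine IntegrableOn.of_bound hμ.lt_top
    (aemeasurable_restrict_of_monotoneOn measurableSet_Ioc
      (hf.mono Ioc_subset_Icc_self)).aestronglyMeasurable
    (max |f x| |f y|) ((ae_restrict_iff' measurableSet_Ioc).2 (ae_of_all _ fun z hz => ?_))
  have hz' := Ioc_subset_Icc_self hz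
  exact abs_le_max_abs_abs (hf (left_mem_Icc.2 (hz'.1.trans hz'.2)) hz' hz'.1)
    (hf hz' (right_mem_Icc.2 (hz'.1.trans hz'.2)) hz'.2)

theorem setIntegral_Ioc_le_mul_of_monotoneOn {μ : Measure ℝ} {f : ℝ → ℝ} {x y : ℝ}
    (hf : MonotoneOn f (Icc x y)) (hμ : μ (Ioc x y) ≠ ⊤) :
    ∫ z in Ioc x y, f z ∂μ ≤ f y * μ.real (Ioc x y) :=
  calc ∫ z in Ioc x y, f z ∂μ ≤ ∫ _ in Ioc x y, f y ∂μ :=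
        setIntegral_mono_on (hf.integrableOn_Ioc hμ) (integrableOn_const hμ) measurableSet_Ioc
          fun _ hz => hf (Ioc_subset_Icc_self hz) (right_mem_Icc.2 (hz.1.le.trans hz.2)) hz.2
    _ = f y * μ.real (Ioc x y) := by rw [setIntegral_const, smul_eq_mul, mul_comm]

theorem mul_le_setIntegral_Ioc_of_monotoneOn {μ : Measure ℝ} {f : ℝ → ℝ} {x y : ℝ}
    (hf : MonotoneOn f (Icc x y)) (hμ : μ (Ioc x y) ≠ ⊤) :
    f x * μ.real (Ioc x y) ≤ ∫ z in Ioc x y, f z ∂μ :=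
  setIntegral_ge_of_const_le_real measurableSet_Ioc hμ
    (fun _ hz => hf (left_mem_Icc.2 (hz.1.le.trans hz.2)) (Ioc_subset_Icc_self hz) hz.1.le)
    (hf.integrableOn_Ioc hμ)

theorem monotoneOn_of_sub_eq_mul_integral {I : Set ℝ} {ν : Measure ℝ} {f g : ℝ → ℝ} {r : ℝ}
    (hI : I.OrdConnected) (hr : 0 ≤ r) (hg : ∀ x ∈ I, 0 ≤ g x)
    (hfg : ∀ x ∈ I, ∀ y ∈ I, f x - f y = r * ∫ z in y..x, g z ∂ν) : MonotoneOn f I := by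
  intro x hx y hy hxy
  have hint : 0 ≤ ∫ z in x..y, g z ∂ν :=
    intervalIntegral.integral_nonneg hxy fun z hz => hg z (hI.out hx hy hz)
  linarith [hfg y hy x hx, mul_nonneg hr hint]

section StieltjesPrimitive

/-! Throughout, `μ` is the Stieltjes measure `ds` on `I`, and `g` is an `s`-primitive of `f`,
that is `f = 𝒟_s g`. -/

variable {I : Set ℝ} {μ : Measure ℝ} {s f g : ℝ → ℝ}

theorem measureReal_Ioc_eq_sub (hs : MonotoneOn s I)
    (hμ : ∀ x ∈ I, ∀ y ∈ I, x ≤ y → μ (Ioc x y) = ENNReal.ofReal (s y - s x))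
    {x y : ℝ} (hx : x ∈ I) (hy : y ∈ I) (hxy : x ≤ y) : μ.real (Ioc x y) = s y - s x := by
  rw [measureReal_def, hμ x hx y hy hxy, ENNReal.toReal_ofReal (sub_nonneg.2 (hs hx hy hxy))]

variable (hI : I.OrdConnected) (hs : MonotoneOn s I)
  (hμ : ∀ x ∈ I, ∀ y ∈ I, x ≤ y → μ (Ioc x y) = ENNReal.ofReal (s y - s x))
  (hgf : ∀ x ∈ I, ∀ y ∈ I, g x - g y = ∫ z in y..x, f z ∂μ) (hf : MonotoneOn f I)
include hI hs hμ hgf hf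

theorem sub_le_mul_sub_of_monotoneOn {x y : ℝ} (hx : x ∈ I) (hy : y ∈ I) (hxy : x ≤ y) :
    g y - g x ≤ f y * (s y - s x) := by
  rw [hgf y hy x hx, intervalIntegral.integral_of_le hxy, ← measureReal_Ioc_eq_sub hs hμ hx hy hxy]
  exact setIntegral_Ioc_le_mul_of_monotoneOn (hf.mono (hI.out hx hy))
    (by rw [hμ x hx y hy hxy]; exact ENNReal.ofReal_ne_top)

theorem mul_sub_le_sub_of_monotoneOn {x y : ℝ} (hx : x ∈ I) (hy : y ∈ I) (hxy : x ≤ y) :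
    f x * (s y - s x) ≤ g y - g x := by
  rw [hgf y hy x hx, intervalIntegral.integral_of_le hxy, ← measureReal_Ioc_eq_sub hs hμ hx hy hxy]
  exact mul_le_setIntegral_Ioc_of_monotoneOn (hf.mono (hI.out hx hy))
    (by rw [hμ x hx y hy hxy]; exact ENNReal.ofReal_ne_top)

theorem sub_le_mul_sub_of_tendsto {F : Filter ℝ} [F.NeBot]
    (hFI : ∀ x ∈ I, ∀ᶠ y in F, y ∈ I ∧ y < x) {sa ga : ℝ} (hsa : Tendsto s F (𝓝 sa))
    (hga : Tendsto g F (𝓝 ga)) {x : ℝ} (hx : x ∈ I) : g x - ga ≤ f x * (s x - sa) :=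
  le_of_tendsto_of_tendsto (tendsto_const_nhds.sub hga)
    ((tendsto_const_nhds.sub hsa).const_mul _) <| by
      filter_upwards [hFI x hx] with y hy
      exact sub_le_mul_sub_of_monotoneOn hI hs hμ hgf hf hy.1 hx hy.2.le

end StieltjesPrimitive

theorem EReal.eventually_comap_coe_nhdsGT {a b : EReal} {x : ℝ} (hax : a < x)
    (hxb : (x : EReal) < b) :
    ∀ᶠ y : ℝ in Filter.comap (fun x : ℝ => (x : EReal)) (𝓝[>] a),
      (a < y ∧ (y : EReal) < b) ∧ y < x := by
  filter_upwards [preimage_mem_comap (Ioo_mem_nhdsGT hax)] with y hy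
  exact ⟨⟨hy.1, hy.2.trans hxb⟩, EReal.coe_lt_coe_iff.1 hy.2⟩

theorem EReal.comap_coe_nhdsGT_neBot {a : EReal} (ha : a ≠ ⊤) :
    (Filter.comap (fun x : ℝ => (x : EReal)) (𝓝[>] a)).NeBot := by
  refine ((nhdsGT_basis_of_exists_gt ⟨⊤, ha.lt_top⟩).comap _).neBot_iff.2 fun {t} ht => ?_
  obtain ⟨x, hx⟩ := EReal.exists_between_coe_real ht
  exact ⟨x, hx⟩

theorem tendsto_mul_deriv_nhds_zero_of_accessible {I : Set ℝ} {F : Filter ℝ} [F.NeBot] {μ : Measure ℝ}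
    {s u v us vs : ℝ → ℝ} {sa k va : ℝ} (hI : I.OrdConnected) (hIne : I.Nonempty)
    (hFI : ∀ x ∈ I, ∀ᶠ y in F, y ∈ I ∧ y < x) (hs : StrictMonoOn s I)
    (hμ : ∀ x ∈ I, ∀ y ∈ I, x ≤ y → μ (Ioc x y) = ENNReal.ofReal (s y - s x))
    (hsa : Tendsto s F (𝓝 sa)) (hunonneg : ∀ x ∈ I, 0 ≤ u x) (hvanti : AntitoneOn v I)
    (hu : ∀ x ∈ I, ∀ y ∈ I, u x - u y = ∫ z in y..x, us z ∂μ)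
    (hv : ∀ x ∈ I, ∀ y ∈ I, v x - v y = ∫ z in y..x, vs z ∂μ)
    (husmono : MonotoneOn us I) (hvsmono : MonotoneOn vs I) (hua : Tendsto u F (𝓝 0))
    (hk : 0 < k) (husa : Tendsto us F (𝓝 k)) (hvaL : Tendsto v F (𝓝 va)) :
    Tendsto (fun x => u x * vs x) F (𝓝 0) := by
  obtain ⟨c, hcI⟩ := hIne
  have hu_le : ∀ x ∈ I, u x ≤ us x * (s x - sa) := fun x hx => by
    simpa using sub_le_mul_sub_of_tendsto hI hs.monotoneOn hμ hu husmono hFI hsa hua hx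
  have hv_le : ∀ x ∈ I, v x - va ≤ vs x * (s x - sa) := fun x hx =>
    sub_le_mul_sub_of_tendsto hI hs.monotoneOn hμ hv hvsmono hFI hsa hvaL hx
  have hvs_nonpos : ∀ᶠ x in F, vs x ≤ 0 := by
    filter_upwards [hFI c hcI] with x ⟨hxI, hxc⟩
    have := mul_sub_le_sub_of_monotoneOn hI hs.monotoneOn hμ hv hvsmono hxI hcI hxc.le
    nlinarith [hvanti hxI hcI hxc.le, hs hxI hcI hxc]
  have hbound : ∀ᶠ x in F, 0 ≤ -(u x * vs x) ∧ -(u x * vs x) ≤ us x * (va - v x) := by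
    filter_upwards [hFI c hcI, hvs_nonpos, husa.eventually (lt_mem_nhds hk)]
      with x ⟨hxI, _⟩ hvsx husx
    have := hunonneg x hxI
    constructor <;> nlinarith [hu_le x hxI, hv_le x hxI]
  have hsq := tendsto_of_tendsto_of_tendsto_of_le_of_le' tendsto_const_nhds
    (by simpa using husa.mul ((tendsto_const_nhds (x := va)).sub hvaL))
    (hbound.mono fun _ => And.left) (hbound.mono fun _ => And.right)
  simpa using hsq.neg

theorem boundary_limit_accessible_general
    (a b : EReal) (hab : a < b)
    (I : Set ℝ) (hI : I = {x : ℝ | a < (x : EReal) ∧ (x : EReal) < b})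
    -- the filter of approach to `a` from the right within the interval
    (F : Filter ℝ) (hF : F = Filter.comap (fun x : ℝ => (x : EReal)) (𝓝[>] a))
    (s : ℝ → ℝ)
    (hs : StrictMonoOn s I)
    (μs μm : Measure ℝ)
    (hμs : ∀ x ∈ I, ∀ y ∈ I, x ≤ y → μs (Set.Ioc x y) = ENNReal.ofReal (s y - s x))
    -- `a` is accessible: `s(a+)` is finite
    (sa : ℝ) (hsa : Tendsto s F (𝓝 sa))
    (r : ℝ) (hr : 0 < r)
    (u v us vs : ℝ → ℝ)
    (hupos : ∀ x ∈ I, 0 < u x)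
    (hvpos : ∀ x ∈ I, 0 < v x) (hvmono : StrictAntiOn v I)
    (hu : ∀ x ∈ I, ∀ y ∈ I, u x - u y = ∫ z in y..x, us z ∂μs)
    (hv : ∀ x ∈ I, ∀ y ∈ I, v x - v y = ∫ z in y..x, vs z ∂μs)
    (hus : ∀ x ∈ I, ∀ y ∈ I, us x - us y = r * ∫ z in y..x, u z ∂μm)
    (hvs : ∀ x ∈ I, ∀ y ∈ I, vs x - vs y = r * ∫ z in y..x, v z ∂μm)
    -- normalization: Wronskian identically one
    (hW : ∀ x ∈ I, v x * us x - u x * vs x = 1)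
    -- `u_r(a+) = 0` and `𝒟_s u_r(a+) = k ∈ (0,∞)`
    (hua : Tendsto u F (𝓝 0))
    (k : ℝ) (hk : 0 < k) (husa : Tendsto us F (𝓝 k))
    -- `v_r(a+) ∈ (0,∞)`
    (va : ℝ) (hva : 0 < va) (hvaL : Tendsto v F (𝓝 va)) :
    Tendsto (fun x => u x * vs x) F (𝓝 0) ∧ k = 1 / va := by
  have hIo : I.OrdConnected := hI ▸ ⟨fun x hx y hy z hz =>
    ⟨hx.1.trans_le (EReal.coe_le_coe_iff.2 hz.1), (EReal.coe_le_coe_iff.2 hz.2).trans_lt hy.2⟩⟩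
  have hIne : I.Nonempty := by
    obtain ⟨c, hc⟩ := EReal.exists_between_coe_real hab
    exact ⟨c, hI ▸ hc⟩
  have hFI : ∀ x ∈ I, ∀ᶠ y in F, y ∈ I ∧ y < x := by
    subst hI hF
    exact fun x hx => EReal.eventually_comap_coe_nhdsGT hx.1 hx.2
  have : F.NeBot := hF ▸ EReal.comap_coe_nhdsGT_neBot hab.ne_top
  have hlim : Tendsto (fun x => u x * vs x) F (𝓝 0) :=
    tendsto_mul_deriv_nhds_zero_of_accessible hIo hIne hFI hs hμs hsa (fun x hx => (hupos x hx).le)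
      hvmono.antitoneOn hu hv
      (monotoneOn_of_sub_eq_mul_integral hIo hr.le (fun x hx => (hupos x hx).le) hus)
      (monotoneOn_of_sub_eq_mul_integral hIo hr.le (fun x hx => (hvpos x hx).le) hvs)
      hua hk husa hvaL
  refine ⟨hlim, ?_⟩
  obtain ⟨c, hcI⟩ := hIne
  have hWa : va * k - 0 = 1 := tendsto_nhds_unique ((hvaL.mul husa).sub hlim)
    (tendsto_const_nhds.congr' (by filter_upwards [hFI c hcI] with x hx using (hW x hx.1).symm))
  rw [eq_div_iff hva.ne']
  linarith

/-- at an accessible boundary `a`, with `u_r(a+) = 0`,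
`𝒟_s u_r(a+) = k ∈ (0,∞)` and `v_r(a+) ∈ (0,∞)`, one has
`lim_{x→a+} u_r(x) 𝒟_s v_r(x) = 0` and consequently `𝒟_s u_r(a+) = 1/v_r(a+)`. -/
theorem boundary_limit_accessible
    (a b : EReal) (hab : a < b)
    (I : Set ℝ) (hI : I = {x : ℝ | a < (x : EReal) ∧ (x : EReal) < b})
    -- the filter of approach to `a` from the right within the interval
    (F : Filter ℝ) (hF : F = Filter.comap (fun x : ℝ => (x : EReal)) (𝓝[>] a))
    (s m : ℝ → ℝ)
    (hs : StrictMonoOn s I) (hscont : ContinuousOn s I)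
    (hm : StrictMonoOn m I) (hmcont : ContinuousOn m I)
    (μs μm : Measure ℝ)
    (hμs : ∀ x ∈ I, ∀ y ∈ I, x ≤ y → μs (Set.Ioc x y) = ENNReal.ofReal (s y - s x))
    (hμm : ∀ x ∈ I, ∀ y ∈ I, x ≤ y → μm (Set.Ioc x y) = ENNReal.ofReal (m y - m x))
    -- `a` is accessible: `s(a+)` is finite
    (sa : ℝ) (hsa : Tendsto s F (𝓝 sa))
    (r : ℝ) (hr : 0 < r)
    (u v us vs : ℝ → ℝ)
    (hupos : ∀ x ∈ I, 0 < u x) (humono : StrictMonoOn u I)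
    (hvpos : ∀ x ∈ I, 0 < v x) (hvmono : StrictAntiOn v I)
    (hu : ∀ x ∈ I, ∀ y ∈ I, u x - u y = ∫ z in y..x, us z ∂μs)
    (hv : ∀ x ∈ I, ∀ y ∈ I, v x - v y = ∫ z in y..x, vs z ∂μs)
    (hus : ∀ x ∈ I, ∀ y ∈ I, us x - us y = r * ∫ z in y..x, u z ∂μm)
    (hvs : ∀ x ∈ I, ∀ y ∈ I, vs x - vs y = r * ∫ z in y..x, v z ∂μm)
    -- normalization: Wronskian identically one
    (hW : ∀ x ∈ I, v x * us x - u x * vs x = 1)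
    -- `u_r(a+) = 0` and `𝒟_s u_r(a+) = k ∈ (0,∞)`
    (hua : Tendsto u F (𝓝 0))
    (k : ℝ) (hk : 0 < k) (husa : Tendsto us F (𝓝 k))
    -- `v_r(a+) ∈ (0,∞)`
    (va : ℝ) (hva : 0 < va) (hvaL : Tendsto v F (𝓝 va))
    -- `v_r(x)/u_r(x) = ∫_x^{b−} ds(y)/u_r(y)²`
    (hratio : ∀ x ∈ I, v x / u x = ∫ y in I ∩ Set.Ioi x, (1 / (u y) ^ 2) ∂μs) :
    Tendsto (fun x => u x * vs x) F (𝓝 0) ∧ k = 1 / va :=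
  boundary_limit_accessible_general a b hab I hI F hF s hs μs μm hμs sa hsa r hr u v us vs hupos
    hvpos hvmono hu hv hus hvs hW hua k hk husa va hva hvaL
end

section
/- Let f ∈ D(L) with f and Lf bounded and continuous on (a,b), where L = 𝒟_m 𝒟_s, and let u_r be the increasing positive solution of Lu = ru with ∫_a^c u_r dm < ∞. Then the limit Q_a := lim_{z→a+} ( f(z) 𝒟_s u_r(z) − u_r(z) 𝒟_s f(z) ) exists and is finite, and for all x ∈ (a,b): ∫_a^x (Lf)(y) u_r(y) dm(y) = Q_a + W[u_r,f](x) + r ∫_a^x f(y) u_r(y) dm(y), where W[u_r,f](x) = u_r(x) 𝒟_s f(x) − f(x) 𝒟_s u_r(x). -/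
/-!
With `W = u 𝒟_s f - f 𝒟_s u`, the Stieltjes product rule `d(FG) = G dF + F dG`
(for `dF = φ dμ`, `dG = ψ dν` it is Fubini on the triangle `{t < z}`, and needs `μ` to have
no atoms) applied to `u 𝒟_s f` and to `f 𝒟_s u` gives `W x - W y = ∫_(y,x] (Lf - r f) u dm`:
the cross terms `∫ 𝒟_s f 𝒟_s u ds` cancel. Since `u` is `m`-integrable near `a` and `f`, `Lf`
are bounded, `(Lf - r f) u` is `m`-integrable on `(a, x)`, so `W` converges at `a+`, and
`Q_a = -lim W`.
-/

open MeasureTheory Real Filter Topology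

open Set
open scoped ENNReal

theorem measure_Ioc_ne_top_of_eq_ofReal {μ : Measure ℝ} {I : Set ℝ} {g : ℝ → ℝ}
    (hμ : ∀ x ∈ I, ∀ y ∈ I, x ≤ y → μ (Ioc x y) = ENNReal.ofReal (g y - g x))
    {y x : ℝ} (hy : y ∈ I) (hx : x ∈ I) : μ (Ioc y x) ≠ ∞ := by
  rcases le_or_gt y x with hyx | hxy
  · exact hμ y hy x hx hyx ▸ ENNReal.ofReal_ne_top
  · simp [Ioc_eq_empty_of_le hxy.le]

theorem measure_singleton_eq_zero_of_eq_ofReal {μ : Measure ℝ} {I : Set ℝ} {m : ℝ → ℝ}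
    (hI : IsOpen I) (hm : ContinuousOn m I)
    (hμ : ∀ x ∈ I, ∀ y ∈ I, x ≤ y → μ (Ioc x y) = ENNReal.ofReal (m y - m x))
    {p : ℝ} (hp : p ∈ I) : μ {p} = 0 := by
  have hlim : Tendsto (fun t => ENNReal.ofReal (m p - m t)) (𝓝[<] p) (𝓝 0) := by
    rw [← ENNReal.ofReal_zero, ← sub_self (m p)]
    exact ENNReal.tendsto_ofReal <| tendsto_const_nhds.sub
      ((hm.continuousAt (hI.mem_nhds hp)).tendsto.mono_left nhdsWithin_le_nhds)
  refine le_antisymm (ge_of_tendsto hlim ?_) zero_le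
  filter_upwards [nhdsWithin_le_nhds (hI.mem_nhds hp), self_mem_nhdsWithin] with t ht htp
  exact hμ t ht p hp htp.le ▸ measure_mono (singleton_subset_iff.2 ⟨htp, le_rfl⟩)

theorem integrableOn_Ioc_of_monotoneOn {μ : Measure ℝ} {u : ℝ → ℝ} {y x : ℝ}
    (hu : MonotoneOn u (Icc y x)) (hμ : μ (Ioc y x) ≠ ∞) : IntegrableOn u (Ioc y x) μ := by
  refine .of_bound hμ.lt_top (aemeasurable_restrict_of_monotoneOn measurableSet_Ioc
    (hu.mono Ioc_subset_Icc_self)).aestronglyMeasurable (|u y| + |u x|)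
    (ae_restrict_of_forall_mem measurableSet_Ioc fun t ht => ?_)
  have hyt := hu (left_mem_Icc.2 (ht.1.le.trans ht.2)) (Ioc_subset_Icc_self ht) ht.1.le
  have htx := hu (Ioc_subset_Icc_self ht) (right_mem_Icc.2 (ht.1.le.trans ht.2)) ht.2
  rw [Real.norm_eq_abs, abs_le]
  constructor <;> linarith [neg_abs_le (u y), le_abs_self (u x), abs_nonneg (u y),
    abs_nonneg (u x)]

theorem MeasureTheory.IntegrableOn.continuousOn_mul_of_abs_le {μ : Measure ℝ} {I S : Set ℝ}
    {g u : ℝ → ℝ} {C : ℝ} (hu : IntegrableOn u S μ) (hI : MeasurableSet I)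
    (hS : MeasurableSet S) (hSI : S ⊆ I) (hg : ContinuousOn g I) (hgC : ∀ x ∈ I, |g x| ≤ C) :
    IntegrableOn (fun x => g x * u x) S μ :=
  hu.bdd_mul ((hg.aestronglyMeasurable hI).mono_measure (Measure.restrict_mono hSI le_rfl))
    (ae_restrict_of_forall_mem hS fun x hx => hgC x (hSI hx))

section TriangleKernel

variable {μ ν : Measure ℝ} {φ ψ : ℝ → ℝ} {y x : ℝ}

noncomputable def triangleKernel (φ ψ : ℝ → ℝ) (t z : ℝ) : ℝ :=
  if t < z then φ t * ψ z else 0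

theorem integrable_triangleKernel [SFinite ν] (hφ : Integrable φ μ) (hψ : Integrable ψ ν) :
    Integrable (Function.uncurry (triangleKernel φ ψ)) (μ.prod ν) := by
  have h : Function.uncurry (triangleKernel φ ψ)
      = {p : ℝ × ℝ | p.1 < p.2}.indicator fun p => φ p.1 * ψ p.2 := by
    funext ⟨t, z⟩
    simp [triangleKernel, indicator_apply]
  rw [h]
  exact (hφ.mul_prod hψ).indicator (measurableSet_lt measurable_fst measurable_snd)

theorem setIntegral_triangleKernel_left {t : ℝ} (ht : y < t) :
    ∫ z in Ioc y x, triangleKernel φ ψ t z ∂ν = φ t * ∫ z in Ioc t x, ψ z ∂ν := by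
  have h : triangleKernel φ ψ t = (Ioi t).indicator fun z => φ t * ψ z := by
    ext z; simp [triangleKernel, indicator_apply]
  have hset : Ioi t ∩ Ioc y x = Ioc t x := by
    ext z; simp only [mem_inter_iff, mem_Ioi, mem_Ioc]
    exact ⟨fun h => ⟨h.1, h.2.2⟩, fun h => ⟨h.1, ht.trans h.1, h.2⟩⟩
  rw [h, integral_indicator measurableSet_Ioi, Measure.restrict_restrict measurableSet_Ioi, hset,
    integral_const_mul]

theorem setIntegral_triangleKernel_right {z : ℝ} (hz : z ≤ x) :
    ∫ t in Ioc y x, triangleKernel φ ψ t z ∂μ = (∫ t in Ioo y z, φ t ∂μ) * ψ z := by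
  have h : (triangleKernel φ ψ · z) = (Iio z).indicator fun t => φ t * ψ z := by
    ext t; simp [triangleKernel, indicator_apply]
  have hset : Iio z ∩ Ioc y x = Ioo y z := by
    ext t; simp only [mem_inter_iff, mem_Iio, mem_Ioc, mem_Ioo]
    exact ⟨fun h => ⟨h.2.1, h.1⟩, fun h => ⟨h.2, h.1, h.2.le.trans hz⟩⟩
  rw [h, integral_indicator measurableSet_Iio, Measure.restrict_restrict measurableSet_Iio, hset,
    integral_mul_const]

theorem integrableOn_mul_setIntegral_Ioc (hν : ν (Ioc y x) ≠ ∞)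
    (hφ : IntegrableOn φ (Ioc y x) μ) (hψ : IntegrableOn ψ (Ioc y x) ν) :
    IntegrableOn (fun t => φ t * ∫ z in Ioc t x, ψ z ∂ν) (Ioc y x) μ := by
  have := isFiniteMeasure_restrict.2 hν
  refine (integrable_triangleKernel hφ hψ).integral_prod_left.congr ?_
  filter_upwards [ae_restrict_mem measurableSet_Ioc] with t ht
  exact setIntegral_triangleKernel_left ht.1

theorem integrableOn_setIntegral_Ioo_mul (hμ : μ (Ioc y x) ≠ ∞) (hν : ν (Ioc y x) ≠ ∞)
    (hφ : IntegrableOn φ (Ioc y x) μ) (hψ : IntegrableOn ψ (Ioc y x) ν) :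
    IntegrableOn (fun z => (∫ t in Ioo y z, φ t ∂μ) * ψ z) (Ioc y x) ν := by
  have := isFiniteMeasure_restrict.2 hμ
  have := isFiniteMeasure_restrict.2 hν
  refine (integrable_triangleKernel hφ hψ).integral_prod_right.congr ?_
  filter_upwards [ae_restrict_mem measurableSet_Ioc] with z hz
  exact setIntegral_triangleKernel_right hz.2

theorem setIntegral_mul_setIntegral_Ioc_eq (hμ : μ (Ioc y x) ≠ ∞) (hν : ν (Ioc y x) ≠ ∞)
    (hφ : IntegrableOn φ (Ioc y x) μ) (hψ : IntegrableOn ψ (Ioc y x) ν) :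
    ∫ t in Ioc y x, φ t * ∫ z in Ioc t x, ψ z ∂ν ∂μ
      = ∫ z in Ioc y x, (∫ t in Ioo y z, φ t ∂μ) * ψ z ∂ν := by
  have := isFiniteMeasure_restrict.2 hμ
  have := isFiniteMeasure_restrict.2 hν
  calc ∫ t in Ioc y x, φ t * ∫ z in Ioc t x, ψ z ∂ν ∂μ
      = ∫ t in Ioc y x, ∫ z in Ioc y x, triangleKernel φ ψ t z ∂ν ∂μ :=
        setIntegral_congr_fun measurableSet_Ioc fun t ht =>
          (setIntegral_triangleKernel_left ht.1).symm
    _ = ∫ z in Ioc y x, ∫ t in Ioc y x, triangleKernel φ ψ t z ∂μ ∂ν :=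
        integral_integral_swap (integrable_triangleKernel hφ hψ)
    _ = ∫ z in Ioc y x, (∫ t in Ioo y z, φ t ∂μ) * ψ z ∂ν :=
        setIntegral_congr_fun measurableSet_Ioc fun z hz => setIntegral_triangleKernel_right hz.2

theorem integrableOn_Ioc_of_sub_eq_setIntegral {G : ℝ → ℝ} (hμ : μ (Ioc y x) ≠ ∞)
    (hν : ν (Ioc y x) ≠ ∞) (hψ : IntegrableOn ψ (Ioc y x) ν)
    (hG : ∀ t ∈ Ioc y x, G x - G t = ∫ z in Ioc t x, ψ z ∂ν) : IntegrableOn G (Ioc y x) μ := by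
  have hone : IntegrableOn (fun _ => (1 : ℝ)) (Ioc y x) μ := integrableOn_const hμ
  refine ((integrableOn_const hμ (C := G x)).sub
    (integrableOn_mul_setIntegral_Ioc hν hone hψ)).congr_fun (fun t ht => ?_) measurableSet_Ioc
  simp only [Pi.sub_apply, one_mul, ← hG t ht, sub_sub_cancel]

theorem mul_sub_mul_eq_setIntegral_mul_add_setIntegral_mul {F G : ℝ → ℝ} (hyx : y ≤ x)
    (hμ : μ (Ioc y x) ≠ ∞) (hν : ν (Ioc y x) ≠ ∞)
    (hφ : IntegrableOn φ (Ioc y x) μ) (hψ : IntegrableOn ψ (Ioc y x) ν)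
    (hatom : ∀ z ∈ Ioc y x, μ {z} = 0)
    (hF : ∀ z ∈ Icc y x, F z - F y = ∫ t in Ioc y z, φ t ∂μ)
    (hG : ∀ t ∈ Icc y x, G x - G t = ∫ z in Ioc t x, ψ z ∂ν) :
    F x * G x - F y * G y
      = ∫ t in Ioc y x, φ t * G t ∂μ + ∫ z in Ioc y x, F z * ψ z ∂ν := by
  set A := fun t => φ t * ∫ z in Ioc t x, ψ z ∂ν
  set B := fun z => (∫ t in Ioo y z, φ t ∂μ) * ψ z
  have hA : IntegrableOn A (Ioc y x) μ := integrableOn_mul_setIntegral_Ioc hν hφ hψ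
  have hB : IntegrableOn B (Ioc y x) ν := integrableOn_setIntegral_Ioo_mul hμ hν hφ hψ
  have hφG : ∫ t in Ioc y x, φ t * G t ∂μ
      = (∫ t in Ioc y x, φ t ∂μ) * G x - ∫ t in Ioc y x, A t ∂μ := by
    rw [← integral_mul_const, ← integral_sub (hφ.mul_const _) hA]
    refine setIntegral_congr_fun measurableSet_Ioc fun t ht => ?_
    simp only [A, ← hG t (Ioc_subset_Icc_self ht)]
    ring
  have hFψ : ∫ z in Ioc y x, F z * ψ z ∂ν
      = F y * ∫ z in Ioc y x, ψ z ∂ν + ∫ z in Ioc y x, B z ∂ν := by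
    rw [← integral_const_mul, ← integral_add (hψ.const_mul _) hB]
    refine setIntegral_congr_fun measurableSet_Ioc fun z hz => ?_
    simp only [B, setIntegral_congr_set (Ioo_ae_eq_Ioc' (hatom z hz)),
      ← hF z (Ioc_subset_Icc_self hz)]
    ring
  rw [hφG, hFψ, setIntegral_mul_setIntegral_Ioc_eq hμ hν hφ hψ, ← hF x (right_mem_Icc.2 hyx),
    ← hG y (left_mem_Icc.2 hyx)]
  ring

end TriangleKernel

section LeftEndpoint

variable {μ : Measure ℝ} {I : Set ℝ} {g : ℝ → ℝ} {y x : ℝ}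

theorem Set.OrdConnected.inter_Iio_eq_union_Ico (hI : I.OrdConnected) (hy : y ∈ I) (hx : x ∈ I)
    (hyx : y ≤ x) : I ∩ Iio x = (I ∩ Iio y) ∪ Ico y x := by
  ext t
  simp only [mem_inter_iff, mem_Iio, mem_union, mem_Ico]
  constructor
  · rintro ⟨htI, htx⟩
    exact (lt_or_ge t y).imp (fun h => ⟨htI, h⟩) fun h => ⟨h, htx⟩
  · rintro (⟨htI, hty⟩ | ⟨hyt, htx⟩)
    · exact ⟨htI, hty.trans_le hyx⟩
    · exact ⟨hI.out hy hx ⟨hyt, htx.le⟩, htx⟩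

theorem Set.OrdConnected.integrableOn_inter_Iio (hI : I.OrdConnected) (hy : y ∈ I) (hx : x ∈ I)
    (hμy : μ {y} = 0) (hμx : μ {x} = 0) (hgy : IntegrableOn g (I ∩ Iio y) μ)
    (hg : IntegrableOn g (Ioc y x) μ) : IntegrableOn g (I ∩ Iio x) μ := by
  rcases le_total x y with hxy | hyx
  · exact hgy.mono_set (inter_subset_inter_right _ (Iio_subset_Iio hxy))
  · rw [hI.inter_Iio_eq_union_Ico hy hx hyx]
    exact hgy.union (hg.congr_set_ae (Ico_ae_eq_Ioc' hμy hμx))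

theorem Set.OrdConnected.setIntegral_inter_Iio (hI : I.OrdConnected) (hy : y ∈ I) (hx : x ∈ I)
    (hyx : y ≤ x) (hμy : μ {y} = 0) (hμx : μ {x} = 0) (hg : IntegrableOn g (I ∩ Iio x) μ) :
    ∫ t in I ∩ Iio x, g t ∂μ = ∫ t in I ∩ Iio y, g t ∂μ + ∫ t in Ioc y x, g t ∂μ := by
  have hdisj : Disjoint (I ∩ Iio y) (Ico y x) :=
    disjoint_left.2 fun t ht ht' => (not_le.2 ht.2) ht'.1
  rw [hI.inter_Iio_eq_union_Ico hy hx hyx] at hg ⊢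
  rw [setIntegral_union hdisj measurableSet_Ico (hg.mono_set subset_union_left)
    (hg.mono_set subset_union_right), setIntegral_congr_set (Ico_ae_eq_Ioc' hμy hμx)]

theorem tendsto_setIntegral_inter_Iio_zero {F : Filter ℝ} [F.IsCountablyGenerated] {c : ℝ}
    (hI : MeasurableSet I) (hc : c ∈ I) (hF : ∀ t ∈ I, ∀ᶠ z in F, z < t)
    (hg : IntegrableOn g (I ∩ Iio c) μ) :
    Tendsto (fun z => ∫ t in I ∩ Iio z, g t ∂μ) F (𝓝 0) := by
  have hmeas : MeasurableSet (I ∩ Iio c) := hI.inter measurableSet_Iio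
  have hdom : Tendsto (fun z => ∫ t, (Iio z).indicator g t ∂μ.restrict (I ∩ Iio c)) F
      (𝓝 (∫ _, (0 : ℝ) ∂μ.restrict (I ∩ Iio c))) := by
    refine tendsto_integral_filter_of_dominated_convergence (fun t => ‖g t‖)
      (.of_forall fun z => hg.1.indicator measurableSet_Iio)
      (.of_forall fun z => .of_forall fun t => norm_indicator_le_norm_self _ _) hg.norm ?_
    filter_upwards [ae_restrict_mem hmeas] with t ht
    refine tendsto_const_nhds.congr' ?_
    filter_upwards [hF t ht.1] with z hz
    exact (indicator_of_notMem (s := Iio z) (not_lt.2 hz.le) g).symm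
  rw [integral_zero] at hdom
  refine hdom.congr' ?_
  filter_upwards [hF c hc] with z hz
  rw [integral_indicator measurableSet_Iio, Measure.restrict_restrict measurableSet_Iio,
    ← inter_assoc, inter_comm _ I, inter_assoc, Iio_inter_Iio, min_eq_left hz.le]

theorem exists_tendsto_of_sub_eq_setIntegral_Ioc (hI : I.OrdConnected) {F : Filter ℝ}
    [F.IsCountablyGenerated] (hF : ∀ x ∈ I, ∀ᶠ z in F, z ∈ I ∧ z < x) {c : ℝ} (hc : c ∈ I)
    (hatom : ∀ p ∈ I, μ {p} = 0) (hg : ∀ x ∈ I, IntegrableOn g (I ∩ Iio x) μ) {W : ℝ → ℝ}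
    (hW : ∀ y ∈ I, ∀ x ∈ I, y ≤ x → W x - W y = ∫ t in Ioc y x, g t ∂μ) :
    ∃ Q, Tendsto W F (𝓝 Q) ∧ ∀ x ∈ I, ∫ t in I ∩ Iio x, g t ∂μ = W x - Q := by
  have hΦ : ∀ y ∈ I, ∀ x ∈ I, y ≤ x →
      ∫ t in I ∩ Iio x, g t ∂μ = ∫ t in I ∩ Iio y, g t ∂μ + (W x - W y) := fun y hy x hx hyx => by
    rw [hW y hy x hx hyx, hI.setIntegral_inter_Iio hy hx hyx (hatom y hy) (hatom x hx) (hg x hx)]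
  refine ⟨W c - ∫ t in I ∩ Iio c, g t ∂μ, ?_, fun x hx => ?_⟩
  · have h0 := tendsto_setIntegral_inter_Iio_zero hI.measurableSet hc
      (fun t ht => (hF t ht).mono fun z hz => hz.2) (hg c hc)
    refine (zero_add (W c - ∫ t in I ∩ Iio c, g t ∂μ) ▸ h0.add_const _).congr' ?_
    filter_upwards [hF c hc] with z hz
    linarith [hΦ z hz.1 c hc hz.2.le]
  · rcases le_total x c with hxc | hcx
    · linarith [hΦ x hx c hc hxc]
    · linarith [hΦ c hc x hx hcx]

end LeftEndpoint

section ERealInterval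

variable {a b : EReal}

theorem isOpen_preimage_coe_Ioo : IsOpen (((↑) : ℝ → EReal) ⁻¹' Ioo a b) :=
  isOpen_Ioo.preimage continuous_coe_real_ereal

theorem ordConnected_preimage_coe_Ioo : (((↑) : ℝ → EReal) ⁻¹' Ioo a b).OrdConnected :=
  ordConnected_Ioo.preimage_mono fun _ _ => EReal.coe_le_coe_iff.2

theorem eventually_comap_coe_nhdsGT_mem_and_lt {x : ℝ}
    (hx : x ∈ ((↑) : ℝ → EReal) ⁻¹' Ioo a b) :
    ∀ᶠ z in comap (↑) (𝓝[>] a), z ∈ ((↑) : ℝ → EReal) ⁻¹' Ioo a b ∧ z < x :=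
  Eventually.mono (preimage_mem_comap (m := ((↑) : ℝ → EReal)) (Ioo_mem_nhdsGT hx.1))
    fun _ hz => ⟨⟨hz.1, hz.2.trans hx.2⟩, EReal.coe_lt_coe_iff.1 hz.2⟩

end ERealInterval

theorem wronskian_sub_wronskian_eq_setIntegral {I : Set ℝ} (hI : I.OrdConnected)
    {μs μm : Measure ℝ} {r : ℝ} {f fs Lf u us : ℝ → ℝ}
    (hf : ∀ x ∈ I, ∀ y ∈ I, f x - f y = ∫ z in y..x, fs z ∂μs)
    (hfs : ∀ x ∈ I, ∀ y ∈ I, fs x - fs y = ∫ z in y..x, Lf z ∂μm)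
    (hu : ∀ x ∈ I, ∀ y ∈ I, u x - u y = ∫ z in y..x, us z ∂μs)
    (hus : ∀ x ∈ I, ∀ y ∈ I, us x - us y = r * ∫ z in y..x, u z ∂μm)
    {y x : ℝ} (hy : y ∈ I) (hx : x ∈ I) (hyx : y ≤ x)
    (hμs : μs (Ioc y x) ≠ ∞) (hμm : μm (Ioc y x) ≠ ∞) (hatom : ∀ z ∈ Ioc y x, μm {z} = 0)
    (hLf : IntegrableOn Lf (Ioc y x) μm) (huint : IntegrableOn u (Ioc y x) μm) :
    (u x * fs x - f x * us x) - (u y * fs y - f y * us y)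
      = ∫ t in Ioc y x, Lf t * u t ∂μm - r * ∫ t in Ioc y x, f t * u t ∂μm := by
  have hF {G g : ℝ → ℝ} {ν : Measure ℝ}
      (hrep : ∀ x ∈ I, ∀ y ∈ I, G x - G y = ∫ z in y..x, g z ∂ν) :
      ∀ z ∈ Icc y x, G z - G y = ∫ t in Ioc y z, g t ∂ν := fun z hz =>
    (hrep z (hI.out hy hx hz) y hy).trans (intervalIntegral.integral_of_le hz.1)
  have hG {G g : ℝ → ℝ} {ν : Measure ℝ}
      (hrep : ∀ x ∈ I, ∀ y ∈ I, G x - G y = ∫ z in y..x, g z ∂ν) :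
      ∀ t ∈ Icc y x, G x - G t = ∫ z in Ioc t x, g z ∂ν := fun t ht =>
    (hrep x hx t (hI.out hy hx ht)).trans (intervalIntegral.integral_of_le ht.2)
  have hus' : ∀ x ∈ I, ∀ y ∈ I, us x - us y = ∫ z in y..x, r * u z ∂μm := fun x hx y hy => by
    rw [hus x hx y hy, intervalIntegral.integral_const_mul]
  have hru : IntegrableOn (fun t => r * u t) (Ioc y x) μm := huint.const_mul r
  have husint : IntegrableOn us (Ioc y x) μs :=
    integrableOn_Ioc_of_sub_eq_setIntegral hμs hμm hru fun t ht =>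
      hG hus' t (Ioc_subset_Icc_self ht)
  have hfsint : IntegrableOn fs (Ioc y x) μs :=
    integrableOn_Ioc_of_sub_eq_setIntegral hμs hμm hLf fun t ht =>
      hG hfs t (Ioc_subset_Icc_self ht)
  have hfs_u := mul_sub_mul_eq_setIntegral_mul_add_setIntegral_mul hyx hμm hμs hLf husint hatom
    (hF hfs) (hG hu)
  have hus_f := mul_sub_mul_eq_setIntegral_mul_add_setIntegral_mul hyx hμm hμs hru hfsint hatom
    (hF hus') (hG hf)
  have hr_out : ∫ t in Ioc y x, r * u t * f t ∂μm = r * ∫ t in Ioc y x, f t * u t ∂μm := by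
    rw [← integral_const_mul]; congr 1; ext t; ring
  have hcomm : ∫ z in Ioc y x, us z * fs z ∂μs = ∫ z in Ioc y x, fs z * us z ∂μs := by
    simp only [mul_comm]
  linarith [hfs_u, hus_f, hr_out, hcomm]

theorem boundary_term_exists_and_identity_general
    (a b : EReal)
    (I : Set ℝ) (hI : I = {x : ℝ | a < (x : EReal) ∧ (x : EReal) < b})
    -- the filter of approach to `a` from the right within the interval
    (F : Filter ℝ) (hF : F = Filter.comap (fun x : ℝ => (x : EReal)) (𝓝[>] a))
    (s m : ℝ → ℝ)
    (hmcont : ContinuousOn m I)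
    (μs μm : Measure ℝ)
    (hμs : ∀ x ∈ I, ∀ y ∈ I, x ≤ y → μs (Set.Ioc x y) = ENNReal.ofReal (s y - s x))
    (hμm : ∀ x ∈ I, ∀ y ∈ I, x ≤ y → μm (Set.Ioc x y) = ENNReal.ofReal (m y - m x))
    (r : ℝ)
    (f fs Lf : ℝ → ℝ)
    -- `fs = 𝒟_s f`, `Lf = 𝒟_m 𝒟_s f`, with `f`, `Lf` bounded and continuous on `I`
    (hf : ∀ x ∈ I, ∀ y ∈ I, f x - f y = ∫ z in y..x, fs z ∂μs)
    (hfs : ∀ x ∈ I, ∀ y ∈ I, fs x - fs y = ∫ z in y..x, Lf z ∂μm)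
    (hfcont : ContinuousOn f I) (hLfcont : ContinuousOn Lf I)
    (Cf CLf : ℝ) (hfbdd : ∀ x ∈ I, |f x| ≤ Cf) (hLfbdd : ∀ x ∈ I, |Lf x| ≤ CLf)
    (u us : ℝ → ℝ)
    (humono : StrictMonoOn u I)
    (hu : ∀ x ∈ I, ∀ y ∈ I, u x - u y = ∫ z in y..x, us z ∂μs)
    (hus : ∀ x ∈ I, ∀ y ∈ I, us x - us y = r * ∫ z in y..x, u z ∂μm)
    -- `∫_a^c u_r dm < ∞`
    (c : ℝ) (hc : c ∈ I) (huintm : IntegrableOn u (I ∩ Set.Iio c) μm) :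
    ∃ Qa : ℝ,
      Tendsto (fun z => f z * us z - u z * fs z) F (𝓝 Qa) ∧
      ∀ x ∈ I,
        (∫ y in I ∩ Set.Iio x, Lf y * u y ∂μm)
          = Qa + (u x * fs x - f x * us x)
            + r * ∫ y in I ∩ Set.Iio x, f y * u y ∂μm := by
  subst hF
  have hIo : IsOpen I := hI ▸ isOpen_preimage_coe_Ioo
  have hIc : I.OrdConnected := hI ▸ ordConnected_preimage_coe_Ioo
  have hleft : ∀ x ∈ I, ∀ᶠ z in comap (↑) (𝓝[>] a), z ∈ I ∧ z < x :=
    hI ▸ fun _ hx => eventually_comap_coe_nhdsGT_mem_and_lt hx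
  have hatom : ∀ p ∈ I, μm {p} = 0 := fun _ =>
    measure_singleton_eq_zero_of_eq_ofReal hIo hmcont hμm
  have hIoc : ∀ {y x}, y ∈ I → x ∈ I → Ioc y x ⊆ I := fun hy hx =>
    Ioc_subset_Icc_self.trans (hIc.out hy hx)
  have hLf : ∀ y ∈ I, ∀ x ∈ I, IntegrableOn Lf (Ioc y x) μm := fun y hy x hx => by
    simpa using (integrableOn_const (C := (1 : ℝ)) (measure_Ioc_ne_top_of_eq_ofReal hμm hy hx)
      ).continuousOn_mul_of_abs_le hIo.measurableSet measurableSet_Ioc (hIoc hy hx) hLfcont hLfbdd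
  have hu_Ioc : ∀ y ∈ I, ∀ x ∈ I, IntegrableOn u (Ioc y x) μm := fun y hy x hx =>
    integrableOn_Ioc_of_monotoneOn (humono.monotoneOn.mono (hIc.out hy hx))
      (measure_Ioc_ne_top_of_eq_ofReal hμm hy hx)
  have hu_Iio : ∀ x ∈ I, IntegrableOn u (I ∩ Iio x) μm := fun x hx =>
    hIc.integrableOn_inter_Iio hc hx (hatom c hc) (hatom x hx) huintm (hu_Ioc c hc x hx)
  have hH : ∀ S ⊆ I, MeasurableSet S → IntegrableOn u S μm →
      IntegrableOn (fun t => Lf t * u t - r * (f t * u t)) S μm ∧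
      ∫ t in S, Lf t * u t - r * (f t * u t) ∂μm
        = ∫ t in S, Lf t * u t ∂μm - r * ∫ t in S, f t * u t ∂μm := fun S hSI hS huS => by
    have h₁ := huS.continuousOn_mul_of_abs_le hIo.measurableSet hS hSI hLfcont hLfbdd
    have h₂ := (huS.continuousOn_mul_of_abs_le hIo.measurableSet hS hSI hfcont hfbdd).const_mul r
    exact ⟨h₁.sub h₂, by rw [integral_sub h₁ h₂, integral_const_mul]⟩
  have hH_Iio (x) (hx : x ∈ I) :=
    hH _ inter_subset_left (hIo.measurableSet.inter measurableSet_Iio) (hu_Iio x hx)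
  obtain ⟨Q, hQ, hQ_eq⟩ := exists_tendsto_of_sub_eq_setIntegral_Ioc hIc hleft hc hatom
    (fun x hx => (hH_Iio x hx).1) (W := fun x => u x * fs x - f x * us x)
    fun y hy x hx hyx => by
      rw [(hH _ (hIoc hy hx) measurableSet_Ioc (hu_Ioc y hy x hx)).2]
      exact wronskian_sub_wronskian_eq_setIntegral hIc hf hfs hu hus hy hx hyx
        (measure_Ioc_ne_top_of_eq_ofReal hμs hy hx) (measure_Ioc_ne_top_of_eq_ofReal hμm hy hx)
        (fun z hz => hatom z (hIoc hy hx hz)) (hLf y hy x hx) (hu_Ioc y hy x hx)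
  refine ⟨-Q, hQ.neg.congr fun z => by ring, fun x hx => ?_⟩
  linarith [hQ_eq x hx, (hH_Iio x hx).2]

/-- for `f ∈ D(L)` with `f, Lf` bounded continuous and `u_r` the
increasing positive solution of `Lu = ru` with `∫_a^c u_r dm < ∞`, the boundary limit
`Q_a = lim_{z→a+} (f 𝒟_s u_r − u_r 𝒟_s f)(z)` exists finitely, and for all `x ∈ (a,b)`:
`∫_a^x (Lf) u_r dm = Q_a + W[u_r,f](x) + r ∫_a^x f u_r dm`. -/
theorem boundary_term_exists_and_identity
    (a b : EReal) (hab : a < b)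
    (I : Set ℝ) (hI : I = {x : ℝ | a < (x : EReal) ∧ (x : EReal) < b})
    -- the filter of approach to `a` from the right within the interval
    (F : Filter ℝ) (hF : F = Filter.comap (fun x : ℝ => (x : EReal)) (𝓝[>] a))
    (s m : ℝ → ℝ)
    (hs : StrictMonoOn s I) (hscont : ContinuousOn s I)
    (hm : StrictMonoOn m I) (hmcont : ContinuousOn m I)
    (μs μm : Measure ℝ)
    (hμs : ∀ x ∈ I, ∀ y ∈ I, x ≤ y → μs (Set.Ioc x y) = ENNReal.ofReal (s y - s x))
    (hμm : ∀ x ∈ I, ∀ y ∈ I, x ≤ y → μm (Set.Ioc x y) = ENNReal.ofReal (m y - m x))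
    (r : ℝ) (hr : 0 < r)
    (f fs Lf : ℝ → ℝ)
    -- `fs = 𝒟_s f`, `Lf = 𝒟_m 𝒟_s f`, with `f`, `Lf` bounded and continuous on `I`
    (hf : ∀ x ∈ I, ∀ y ∈ I, f x - f y = ∫ z in y..x, fs z ∂μs)
    (hfs : ∀ x ∈ I, ∀ y ∈ I, fs x - fs y = ∫ z in y..x, Lf z ∂μm)
    (hfcont : ContinuousOn f I) (hLfcont : ContinuousOn Lf I)
    (Cf CLf : ℝ) (hfbdd : ∀ x ∈ I, |f x| ≤ Cf) (hLfbdd : ∀ x ∈ I, |Lf x| ≤ CLf)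
    (u us : ℝ → ℝ)
    (hupos : ∀ x ∈ I, 0 < u x) (humono : StrictMonoOn u I)
    (hu : ∀ x ∈ I, ∀ y ∈ I, u x - u y = ∫ z in y..x, us z ∂μs)
    (hus : ∀ x ∈ I, ∀ y ∈ I, us x - us y = r * ∫ z in y..x, u z ∂μm)
    -- `∫_a^c u_r dm < ∞`
    (c : ℝ) (hc : c ∈ I) (huintm : IntegrableOn u (I ∩ Set.Iio c) μm) :
    ∃ Qa : ℝ,
      Tendsto (fun z => f z * us z - u z * fs z) F (𝓝 Qa) ∧
      ∀ x ∈ I,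
        (∫ y in I ∩ Set.Iio x, Lf y * u y ∂μm)
          = Qa + (u x * fs x - f x * us x)
            + r * ∫ y in I ∩ Set.Iio x, f y * u y ∂μm :=
  boundary_term_exists_and_identity_general a b I hI F hF s m hmcont μs μm hμs hμm r f fs Lf hf hfs
    hfcont hLfcont Cf CLf hfbdd hLfbdd u us humono hu hus c hc huintm
end

section
/- Suppose a is an entrance boundary, i.e. u_r(a+) ∈ (0,∞) and 𝒟_s u_r(a+) = 0, and let f ∈ D(L) with f, Lf bounded continuous on (a,b). If the boundary limit Q_a = lim_{z→a+}( f(z) 𝒟_s u_r(z) − u_r(z) 𝒟_s f(z) ) equals 0, then 𝒟_s f(a+) = 0. -/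
open MeasureTheory Real Filter Topology

/-! Since `f` is bounded and `𝒟_s u_r → 0`, the term `f 𝒟_s u_r` of `Q_a` tends to `0`, so
`Q_a = 0` forces `u_r 𝒟_s f → 0`; as `u_r(a+) ≠ 0`, this gives `𝒟_s f(a+) = 0`. -/

theorem eq_zero_of_tendsto_wronskian {α : Type*} {l : Filter α} [l.NeBot]
    {u us f fs : α → ℝ} {ua dfa C : ℝ} (hua : ua ≠ 0) (hu : Tendsto u l (𝓝 ua))
    (hus : Tendsto us l (𝓝 0)) (hf : ∀ᶠ x in l, |f x| ≤ C) (hfs : Tendsto fs l (𝓝 dfa))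
    (hQ : Tendsto (fun z => f z * us z - u z * fs z) l (𝓝 0)) :
    dfa = 0 := by
  have hus_f : Tendsto (fun z => us z * f z) l (𝓝 0) :=
    hus.zero_mul_isBoundedUnder_le (isBoundedUnder_of_eventually_le hf)
  have hu_fs : Tendsto (fun z => u z * fs z) l (𝓝 0) := by
    simpa [mul_comm] using hus_f.sub hQ
  have hprod : ua * dfa = 0 := tendsto_nhds_unique (hu.mul hfs) hu_fs
  exact (mul_eq_zero.mp hprod).resolve_left hua

namespace EReal

theorem comap_coe_nhdsGT_neBot_s13 {a : EReal} (ha : a < ⊤) :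
    (comap ((↑) : ℝ → EReal) (𝓝[>] a)).NeBot := by
  refine (nhdsGT_neBot_of_exists_gt ⟨⊤, ha⟩).comap_of_range_mem ?_
  rw [range_coe_eq_Ioo]
  exact mem_of_superset (Ioo_mem_nhdsGT ha) (Set.Ioo_subset_Ioo_left bot_le)

theorem eventually_comap_coe_nhdsGT_mem_Ioo {a b : EReal} (hab : a < b) :
    ∀ᶠ x : ℝ in comap ((↑) : ℝ → EReal) (𝓝[>] a), a < (x : EReal) ∧ (x : EReal) < b :=
  tendsto_comap.eventually (Ioo_mem_nhdsGT hab)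

end EReal

theorem entrance_boundary_derivative_vanishes_general
    (a b : EReal) (hab : a < b)
    (I : Set ℝ) (hI : I = {x : ℝ | a < (x : EReal) ∧ (x : EReal) < b})
    -- the filter of approach to `a` from the right within the interval
    (F : Filter ℝ) (hF : F = Filter.comap (fun x : ℝ => (x : EReal)) (𝓝[>] a))
    (u us : ℝ → ℝ)
    -- `a` is an entrance boundary: `u_r(a+) ∈ (0,∞)` and `𝒟_s u_r(a+) = 0`
    (ua : ℝ) (hua : 0 < ua) (huaL : Tendsto u F (𝓝 ua))
    (husL : Tendsto us F (𝓝 0))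
    -- `f ∈ D(L)` with `f`, `Lf` bounded continuous
    (f fs : ℝ → ℝ)
    (Cf : ℝ) (hfbdd : ∀ x ∈ I, |f x| ≤ Cf)
    -- the boundary limit `Q_a` equals zero
    (hQa : Tendsto (fun z => f z * us z - u z * fs z) F (𝓝 0))
    -- `𝒟_s f(a+)` exists
    (dfa : ℝ) (hdfa : Tendsto fs F (𝓝 dfa)) :
    dfa = 0 := by
  subst hI hF
  have := EReal.comap_coe_nhdsGT_neBot_s13 (hab.trans_le le_top)
  have hf : ∀ᶠ x in comap (↑) (𝓝[>] a), |f x| ≤ Cf :=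
    (EReal.eventually_comap_coe_nhdsGT_mem_Ioo hab).mono hfbdd
  exact eq_zero_of_tendsto_wronskian hua.ne' huaL husL hf hdfa hQa

/-- at an entrance boundary `a` (`u_r(a+) ∈ (0,∞)`, `𝒟_s u_r(a+) = 0`),
if the boundary limit `Q_a = lim_{z→a+}(f 𝒟_s u_r − u_r 𝒟_s f)(z)` equals `0`,
then `𝒟_s f(a+) = 0`. -/
theorem entrance_boundary_derivative_vanishes
    (a b : EReal) (hab : a < b)
    (I : Set ℝ) (hI : I = {x : ℝ | a < (x : EReal) ∧ (x : EReal) < b})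
    -- the filter of approach to `a` from the right within the interval
    (F : Filter ℝ) (hF : F = Filter.comap (fun x : ℝ => (x : EReal)) (𝓝[>] a))
    (s m : ℝ → ℝ)
    (hs : StrictMonoOn s I) (hscont : ContinuousOn s I)
    (hm : StrictMonoOn m I) (hmcont : ContinuousOn m I)
    (μs μm : Measure ℝ)
    (hμs : ∀ x ∈ I, ∀ y ∈ I, x ≤ y → μs (Set.Ioc x y) = ENNReal.ofReal (s y - s x))
    (hμm : ∀ x ∈ I, ∀ y ∈ I, x ≤ y → μm (Set.Ioc x y) = ENNReal.ofReal (m y - m x))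
    (r : ℝ) (hr : 0 < r)
    (u us : ℝ → ℝ)
    (hupos : ∀ x ∈ I, 0 < u x) (humono : StrictMonoOn u I)
    (hu : ∀ x ∈ I, ∀ y ∈ I, u x - u y = ∫ z in y..x, us z ∂μs)
    (hus : ∀ x ∈ I, ∀ y ∈ I, us x - us y = r * ∫ z in y..x, u z ∂μm)
    -- `a` is an entrance boundary: `u_r(a+) ∈ (0,∞)` and `𝒟_s u_r(a+) = 0`
    (ua : ℝ) (hua : 0 < ua) (huaL : Tendsto u F (𝓝 ua))
    (husL : Tendsto us F (𝓝 0))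
    -- `f ∈ D(L)` with `f`, `Lf` bounded continuous
    (f fs Lf : ℝ → ℝ)
    (hf : ∀ x ∈ I, ∀ y ∈ I, f x - f y = ∫ z in y..x, fs z ∂μs)
    (hfs : ∀ x ∈ I, ∀ y ∈ I, fs x - fs y = ∫ z in y..x, Lf z ∂μm)
    (hfcont : ContinuousOn f I) (hLfcont : ContinuousOn Lf I)
    (Cf CLf : ℝ) (hfbdd : ∀ x ∈ I, |f x| ≤ Cf) (hLfbdd : ∀ x ∈ I, |Lf x| ≤ CLf)
    -- the boundary limit `Q_a` equals zero
    (hQa : Tendsto (fun z => f z * us z - u z * fs z) F (𝓝 0))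
    -- `𝒟_s f(a+)` exists
    (dfa : ℝ) (hdfa : Tendsto fs F (𝓝 dfa)) :
    dfa = 0 :=
  entrance_boundary_derivative_vanishes_general a b hab I hI F hF u us ua hua huaL husL f fs Cf
    hfbdd hQa dfa hdfa
end
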